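/- Let P be a separative atomless poset, r₀ = ⟨h₀,w₀⟩ ∈ R_P(P) and m ∈ ω. Then the set I²_{r₀,m} = { r = ⟨h,w⟩ ∈ R_P(P) : either r is incompatible with r₀ in R_P(P), or for every q ∈ w₀, every p ∈ dom(h₀) such that p is compatible with q and no p′ ∈ dom(h₀) with p ≤ p′ and p ≠ p′ is compatible with q, and every ν ∈ 2^m with h₀(p) ⊆ ν, there is p″ ∈ dom(h) with p ≤ p″, p″ compatible with q, and ν ⊆ h(p″) } is dense in R_P(P). -/

import Mathlib

/-- Restriction `η↾k` of `η ∈ 2^ω` to its first `k` entries, as a finite binary sequence. -/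
def restrict (η : ℕ → Bool) (k : ℕ) : List Bool := List.ofFn (fun i : Fin k => η i)

/-- `J ⊆ 2^{<ω}` contains a front above `ν`: every branch of Cantor space extending `ν`
has a restriction belonging to `J`. -/
def FrontAbove (J : Set (List Bool)) (ν : List Bool) : Prop :=
  ∀ η : ℕ → Bool, restrict η ν.length = ν → ∃ k : ℕ, restrict η k ∈ J

/-- Compatibility in a forcing notion: a common upper bound exists. -/
def PCompat {P : Type} (le : P → P → Prop) (p q : P) : Prop :=
  ∃ r, le p r ∧ le q r

/-- Conditions of the forcing notion `R_S(P)`: pairs `⟨h, w⟩` where `h` is a finite partial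
function from `S` to `2^{<ω}` such that compatible elements of `dom h` are comparable and
`h` is monotone (with respect to end-extension), and `w` is a finite subset of `P`. -/
structure RCond (P : Type) [PartialOrder P] (S : Set P) where
  /-- the finite partial function, coded with values in `Option (List Bool)` -/
  h : P → Option (List Bool)
  /-- the finite side set -/
  w : Finset P
  dom_finite : {p : P | h p ≠ none}.Finite
  dom_subset : ∀ p : P, h p ≠ none → p ∈ S
  dom_comparable : ∀ p₁ p₂ : P, h p₁ ≠ none → h p₂ ≠ none →
    PCompat (· ≤ ·) p₁ p₂ → p₁ ≤ p₂ ∨ p₂ ≤ p₁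
  mono : ∀ (p₁ p₂ : P) (ν₁ ν₂ : List Bool),
    h p₁ = some ν₁ → h p₂ = some ν₂ → p₁ ≤ p₂ → ν₁ <+: ν₂

/-- The order of `R_S(P)`. -/
def RCond.le {P : Type} [PartialOrder P] {S : Set P} (r₁ r₂ : RCond P S) : Prop :=
  (∀ (p : P) (ν : List Bool), r₁.h p = some ν → r₂.h p = some ν) ∧
  r₁.w ⊆ r₂.w ∧
  ∀ q ∈ r₁.w, ∀ (p : P) (ν : List Bool), r₁.h p = some ν →
    PCompat (· ≤ ·) p q →
    (¬ ∃ p' : P, r₁.h p' ≠ none ∧ p ≤ p' ∧ p ≠ p' ∧ PCompat (· ≤ ·) p' q) →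
    FrontAbove
      {μ : List Bool | ∃ p₁ : P, r₂.h p₁ = some μ ∧ p ≤ p₁ ∧ PCompat (· ≤ ·) p₁ q ∧
        ∀ p₂ : P, r₂.h p₂ ≠ none → p₁ ≤ p₂ → p₁ ≠ p₂ → ¬ PCompat (· ≤ ·) p₂ q} ν

/-- A set `D` is dense in a forcing notion if every condition has an upper bound in `D`. -/
def PDense {P : Type} (le : P → P → Prop) (D : Set P) : Prop :=
  ∀ p : P, ∃ q ∈ D, le p q

/-- A poset is atomless if every element has two incompatible extensions. -/
def Atomless (P : Type) [PartialOrder P] : Prop :=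
  ∀ p : P, ∃ q₁ q₂ : P, p ≤ q₁ ∧ p ≤ q₂ ∧ ¬ PCompat (· ≤ ·) q₁ q₂

/-- A poset is separative if whenever `p ≰ q` there is `r ≥ q` incompatible with `p`. -/
def Separative (P : Type) [PartialOrder P] : Prop :=
  ∀ p q : P, ¬ p ≤ q → ∃ r : P, q ≤ r ∧ ¬ PCompat (· ≤ ·) p r

/-
Fix `r₀` and a condition `s ≥ r₀`. For each of the finitely many requirements `(q, p, ν)`, the
front of `s` above `h₀(p)` meets the branch through `ν` in some `h_s(p₁) = ν↾k` with `p₁ ≥ p`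
maximal in `dom h_s` among the elements compatible with `q`. If `k < |ν|`, pick `x` above `p₁` and
`q` deciding every element of `w_s` (separativity) and `2^{|ν|-k}` pairwise incompatible conditions
above `x` (atomlessness); grafting them onto `p₁` with labels `ν↾k ++ l` gives an extension of `s`:
the old fronts survive because the new leaves are maximal, and the only node that loses maximality
is `p₁`, whose new front is the full set of leaves. Since each requirement is upward closed,
meeting them one after the other gives an element of `I²_{r₀,m}` above any `r` compatible with `r₀`.
-/

theorem exists_le_forall_mem_of_finite {α ι : Type*} [Preorder α] {I : Set ι} (hI : I.Finite)
    {D : ι → Set α} {a : α} (hup : ∀ i ∈ I, IsUpperSet (D i))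
    (hD : ∀ i ∈ I, ∀ b, a ≤ b → ∃ c, b ≤ c ∧ c ∈ D i) :
    ∀ b, a ≤ b → ∃ c, b ≤ c ∧ ∀ i ∈ I, c ∈ D i := by
  induction I, hI using Set.Finite.induction_on with
  | empty => exact fun b _ => ⟨b, le_rfl, by simp⟩
  | @insert i I _ _ ih =>
    intro b hab
    obtain ⟨c, hbc, hc⟩ := ih (fun j hj => hup j (.inr hj)) (fun j hj => hD j (.inr hj)) b hab
    obtain ⟨d, hcd, hd⟩ := hD i (.inl rfl) c (hab.trans hbc)
    refine ⟨d, hbc.trans hcd, ?_⟩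
    rintro j (rfl | hj)
    exacts [hd, hup j (.inr hj) hcd (hc j hj)]

section Cantor

@[simp] lemma restrict_length (η : ℕ → Bool) (k : ℕ) : (restrict η k).length = k :=
  List.length_ofFn

lemma restrict_take (η : ℕ → Bool) {k k' : ℕ} (h : k ≤ k') :
    (restrict η k').take k = restrict η k := by
  apply List.ext_getElem <;> simp [restrict, h]

lemma restrict_prefix (η : ℕ → Bool) {k k' : ℕ} (h : k ≤ k') :
    restrict η k <+: restrict η k' :=
  restrict_take η h ▸ List.take_prefix _ _

lemma restrict_getD {ν : List Bool} {k : ℕ} (h : k ≤ ν.length) :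
    restrict (fun i => ν.getD i false) k = ν.take k := by
  apply List.ext_getElem
  · simp [h]
  · intro i _ hi
    simp only [restrict, List.getElem_ofFn, List.getElem_take]
    exact List.getD_eq_getElem _ _ (by rw [List.length_take] at hi; omega)

lemma frontAbove_of_mem {J : Set (List Bool)} {ν : List Bool} (h : ν ∈ J) : FrontAbove J ν :=
  fun _ hη => ⟨ν.length, by rwa [hη]⟩

lemma frontAbove_of_forall_append {J : Set (List Bool)} {ν : List Bool} {n : ℕ}
    (h : ∀ l : List Bool, l.length = n → ν ++ l ∈ J) : FrontAbove J ν := by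
  intro η hη
  refine ⟨ν.length + n, ?_⟩
  have hsplit := List.take_append_drop ν.length (restrict η (ν.length + n))
  rw [restrict_take η (by omega), hη] at hsplit
  rw [← hsplit]
  exact h _ (by simp)

end Cantor

section Poset

variable {P : Type} [PartialOrder P]

lemma PCompat.symm {p q : P} (h : PCompat (· ≤ ·) p q) : PCompat (· ≤ ·) q p :=
  let ⟨r, hp, hq⟩ := h; ⟨r, hq, hp⟩

lemma PCompat.mono {p p' q q' : P} (h : PCompat (· ≤ ·) p q) (hp : p' ≤ p) (hq : q' ≤ q) :
    PCompat (· ≤ ·) p' q' :=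
  let ⟨r, hpr, hqr⟩ := h; ⟨r, hp.trans hpr, hq.trans hqr⟩

lemma Separative.exists_le_decides (hsep : Separative P) (W : Finset P) (t : P) :
    ∃ x, t ≤ x ∧ ∀ q ∈ W, q ≤ x ∨ ¬ PCompat (· ≤ ·) q x := by
  classical
  induction W using Finset.induction_on with
  | empty => exact ⟨t, le_rfl, by simp⟩
  | @insert q W _ ih =>
    obtain ⟨x, htx, hx⟩ := ih
    by_cases hqx : q ≤ x
    · refine ⟨x, htx, ?_⟩
      rintro q' hq'
      rcases Finset.mem_insert.mp hq' with rfl | hq'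
      exacts [.inl hqx, hx q' hq']
    · obtain ⟨y, hxy, hqy⟩ := hsep q x hqx
      refine ⟨y, htx.trans hxy, ?_⟩
      rintro q' hq'
      rcases Finset.mem_insert.mp hq' with rfl | hq'
      · exact .inr hqy
      · exact (hx q' hq').imp (·.trans hxy) fun h hc => h (hc.mono le_rfl hxy)

lemma Atomless.exists_pairwise_incompat (hatomless : Atomless P) (n : ℕ) (x : P) :
    ∃ f : List Bool → P, (∀ l : List Bool, l.length = n → x ≤ f l) ∧
      ∀ l l' : List Bool, l.length = n → l'.length = n → l ≠ l' →
        ¬ PCompat (· ≤ ·) (f l) (f l') := by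
  induction n generalizing x with
  | zero =>
    refine ⟨fun _ => x, fun _ _ => le_rfl, fun l l' hl hl' hne => ?_⟩
    simp_all [List.length_eq_zero_iff]
  | succ n ih =>
    obtain ⟨x₁, x₂, hx₁, hx₂, hinc⟩ := hatomless x
    obtain ⟨f₁, hf₁x, hf₁⟩ := ih x₁
    obtain ⟨f₂, hf₂x, hf₂⟩ := ih x₂
    let f : List Bool → P
      | [] => x
      | b :: l => if b then f₁ l else f₂ l
    refine ⟨f, fun l hl => ?_, fun l l' hl hl' hne => ?_⟩
    · obtain ⟨b, l, rfl⟩ := List.exists_cons_of_length_eq_add_one hl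
      have hln : l.length = n := by simpa using hl
      cases b
      exacts [hx₂.trans (hf₂x l hln), hx₁.trans (hf₁x l hln)]
    · obtain ⟨b, l, rfl⟩ := List.exists_cons_of_length_eq_add_one hl
      obtain ⟨b', l', rfl⟩ := List.exists_cons_of_length_eq_add_one hl'
      have hln : l.length = n := by simpa using hl
      have hln' : l'.length = n := by simpa using hl'
      cases b <;> cases b' <;> simp only [f, if_true, Bool.false_eq_true, if_false]
      · exact hf₂ l l' hln hln' (by rintro rfl; exact hne rfl)
      · exact fun hc => hinc (hc.symm.mono (hf₁x l' hln') (hf₂x l hln))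
      · exact fun hc => hinc (hc.mono (hf₁x l hln) (hf₂x l' hln'))
      · exact hf₁ l l' hln hln' (by rintro rfl; exact hne rfl)

end Poset

namespace RCond

variable {P : Type} [PartialOrder P] {S : Set P}

def NoLargerCompat (h : P → Option (List Bool)) (p q : P) : Prop :=
  ∀ p₂ : P, h p₂ ≠ none → p ≤ p₂ → p ≠ p₂ → ¬ PCompat (· ≤ ·) p₂ q

lemma noLargerCompat_iff {h : P → Option (List Bool)} {p q : P} :
    NoLargerCompat h p q ↔ ¬ ∃ p' : P, h p' ≠ none ∧ p ≤ p' ∧ p ≠ p' ∧ PCompat (· ≤ ·) p' q := by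
  simp [NoLargerCompat]

/-- The set `J_{p,q}` of the order of `R_S(P)`, computed in the partial function `h`. -/
def frontSet (h : P → Option (List Bool)) (p q : P) : Set (List Bool) :=
  {μ | ∃ p₁ : P, h p₁ = some μ ∧ p ≤ p₁ ∧ PCompat (· ≤ ·) p₁ q ∧ NoLargerCompat h p₁ q}

lemma le_mk {r₁ r₂ : RCond P S} (hh : ∀ p ν, r₁.h p = some ν → r₂.h p = some ν)
    (hw : r₁.w ⊆ r₂.w)
    (hfront : ∀ q ∈ r₁.w, ∀ p ν, r₁.h p = some ν → PCompat (· ≤ ·) p q →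
      NoLargerCompat r₁.h p q → FrontAbove (frontSet r₂.h p q) ν) :
    RCond.le r₁ r₂ :=
  ⟨hh, hw, fun q hq p ν hp hpq hmax => hfront q hq p ν hp hpq (noLargerCompat_iff.mpr hmax)⟩

instance : Preorder (RCond P S) where
  le := RCond.le
  le_refl r := le_mk (fun _ _ => id) subset_rfl
    fun _ _ p _ hp hpq hmax => frontAbove_of_mem ⟨p, hp, le_rfl, hpq, hmax⟩
  le_trans r₁ r₂ r₃ h₁₂ h₂₃ := by
    refine le_mk (fun p ν hp => h₂₃.1 p ν (h₁₂.1 p ν hp)) (h₁₂.2.1.trans h₂₃.2.1) ?_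
    intro q hq p ν hp hpq hmax η hη
    obtain ⟨k, p₁, hp₁, hpp₁, hp₁q, hmax₁⟩ :=
      h₁₂.2.2 q hq p ν hp hpq (noLargerCompat_iff.mp hmax) η hη
    obtain ⟨k', p₂, hp₂, hp₁p₂, hp₂q, hmax₂⟩ := h₂₃.2.2 q (h₁₂.2.1 hq) p₁ _ hp₁ hp₁q
      (noLargerCompat_iff.mp hmax₁) η (by rw [restrict_length])
    exact ⟨k', p₂, hp₂, hpp₁.trans hp₁p₂, hp₂q, hmax₂⟩

lemma h_eq_of_le {r₁ r₂ : RCond P S} (h : r₁ ≤ r₂) {p : P} {ν : List Bool}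
    (hp : r₁.h p = some ν) : r₂.h p = some ν :=
  h.1 p ν hp

lemma frontAbove_of_le {r₁ r₂ : RCond P S} (h : r₁ ≤ r₂) {p q : P} {ν : List Bool}
    (hq : q ∈ r₁.w) (hp : r₁.h p = some ν) (hpq : PCompat (· ≤ ·) p q)
    (hmax : ¬ ∃ p' : P, r₁.h p' ≠ none ∧ p ≤ p' ∧ p ≠ p' ∧ PCompat (· ≤ ·) p' q) :
    FrontAbove (frontSet r₂.h p q) ν :=
  h.2.2 q hq p ν hp hpq hmax

/-- The requirement of `I²_{r₀,m}` attached to `q ∈ w₀`, `p ∈ dom h₀` and `ν ∈ 2^m`. -/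
def Covers (r : RCond P S) (p q : P) (ν : List Bool) : Prop :=
  ∃ (p'' : P) (μ : List Bool), r.h p'' = some μ ∧ p ≤ p'' ∧ PCompat (· ≤ ·) p'' q ∧ ν <+: μ

lemma isUpperSet_covers (p q : P) (ν : List Bool) : IsUpperSet {r : RCond P S | r.Covers p q ν} :=
  fun _ _ hr ⟨p'', μ, hμ, hpp'', hp''q, hνμ⟩ => ⟨p'', μ, h_eq_of_le hr hμ, hpp'', hp''q, hνμ⟩

lemma le_of_pcompat_of_noLargerCompat (r : RCond P S) {p p₁ q t : P} (hp : r.h p ≠ none)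
    (hp₁ : r.h p₁ ≠ none) (hmax : NoLargerCompat r.h p₁ q) (hp₁t : p₁ ≤ t) (hqt : q ≤ t)
    (hpt : PCompat (· ≤ ·) p t) : p ≤ p₁ := by
  rcases r.dom_comparable p p₁ hp hp₁ (hpt.mono le_rfl hp₁t) with h | h
  · exact h
  · by_cases he : p₁ = p
    · exact he ▸ le_rfl
    · exact absurd (hpt.mono le_rfl hqt) (hmax p hp h he)

/-- Data for grafting onto `s`, above the node `node ∈ dom s.h`, pairwise incompatible leaves
`leaf l` (`l ∈ 2^n`) above `top`, labelled `label ++ l`. -/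
structure Graft (s : RCond P Set.univ) where
  node : P
  label : List Bool
  top : P
  n : ℕ
  leaf : List Bool → P
  h_node : s.h node = some label
  node_le_top : node ≤ top
  le_node_of_pcompat_top : ∀ p, s.h p ≠ none → PCompat (· ≤ ·) p top → p ≤ node
  top_decides : ∀ q ∈ s.w, q ≤ top ∨ ¬ PCompat (· ≤ ·) q top
  n_pos : 0 < n
  top_le_leaf : ∀ l : List Bool, l.length = n → top ≤ leaf l
  leaf_incompat : ∀ l l' : List Bool, l.length = n → l'.length = n → l ≠ l' →
    ¬ PCompat (· ≤ ·) (leaf l) (leaf l')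

namespace Graft

variable {s : RCond P Set.univ} (g : s.Graft)

lemma injOn_leaf : Set.InjOn g.leaf {l | l.length = g.n} := by
  intro l hl l' hl' he
  by_contra hne
  exact g.leaf_incompat l l' hl hl' hne ⟨g.leaf l', he.le, le_rfl⟩

lemma le_node_of_pcompat_leaf {p : P} {l : List Bool} (hp : s.h p ≠ none) (hl : l.length = g.n)
    (hc : PCompat (· ≤ ·) p (g.leaf l)) : p ≤ g.node :=
  g.le_node_of_pcompat_top p hp (hc.mono le_rfl (g.top_le_leaf l hl))

lemma h_leaf {l : List Bool} (hl : l.length = g.n) : s.h (g.leaf l) = none := by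
  by_contra hdom
  have hnode : g.leaf l ≤ g.node :=
    g.le_node_of_pcompat_leaf hdom hl ⟨g.leaf l, le_rfl, le_rfl⟩
  have htop : g.leaf l = g.top :=
    le_antisymm (hnode.trans g.node_le_top) (g.top_le_leaf l hl)
  -- a second leaf lies above `top = leaf l`, contradicting incompatibility
  obtain ⟨l', hl', hne⟩ : ∃ l' : List Bool, l'.length = g.n ∧ l' ≠ l := by
    by_cases h : l = List.replicate g.n true
    · exact ⟨List.replicate g.n false, by simp, by simp [h, List.replicate_inj, g.n_pos.ne']⟩
    · exact ⟨List.replicate g.n true, by simp, Ne.symm h⟩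
  exact g.leaf_incompat l' l hl' hl hne ⟨g.leaf l', le_rfl, htop ▸ g.top_le_leaf l' hl'⟩

open Classical in
noncomputable def newH (y : P) : Option (List Bool) :=
  if y ∈ g.leaf '' {l | l.length = g.n} then
    some (g.label ++ Function.invFunOn g.leaf {l | l.length = g.n} y)
  else s.h y

lemma newH_leaf {l : List Bool} (hl : l.length = g.n) :
    g.newH (g.leaf l) = some (g.label ++ l) := by
  rw [newH, if_pos (Set.mem_image_of_mem g.leaf (show l ∈ {l | l.length = g.n} from hl)),
    g.injOn_leaf.leftInvOn_invFunOn hl]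

lemma newH_of_ne_none {y : P} (hy : s.h y ≠ none) : g.newH y = s.h y := by
  refine if_neg ?_
  rintro ⟨l, hl, rfl⟩
  exact hy (g.h_leaf hl)

lemma newH_eq_some {y : P} {μ : List Bool} (hy : g.newH y = some μ) :
    s.h y = some μ ∨ ∃ l : List Bool, l.length = g.n ∧ g.leaf l = y ∧ μ = g.label ++ l := by
  by_cases hleaf : y ∈ g.leaf '' {l | l.length = g.n}
  · obtain ⟨l, hl, rfl⟩ := hleaf
    rw [g.newH_leaf hl, Option.some_inj] at hy
    exact .inr ⟨l, hl, rfl, hy.symm⟩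
  · rw [newH, if_neg hleaf] at hy
    exact .inl hy

lemma newH_ne_none {y : P} (hy : g.newH y ≠ none) :
    s.h y ≠ none ∨ ∃ l : List Bool, l.length = g.n ∧ g.leaf l = y := by
  obtain ⟨μ, hμ⟩ := Option.ne_none_iff_exists'.mp hy
  rcases g.newH_eq_some hμ with hμ | ⟨l, hl, rfl, -⟩
  exacts [.inl (by simp [hμ]), .inr ⟨l, hl, rfl⟩]

lemma newH_dom_finite : {y : P | g.newH y ≠ none}.Finite :=
  (s.dom_finite.union ((List.finite_length_eq Bool g.n).image g.leaf)).subset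
    fun _ hy => g.newH_ne_none hy

lemma newH_comparable (p₁ p₂ : P) (h₁ : g.newH p₁ ≠ none) (h₂ : g.newH p₂ ≠ none)
    (hc : PCompat (· ≤ ·) p₁ p₂) : p₁ ≤ p₂ ∨ p₂ ≤ p₁ := by
  rcases g.newH_ne_none h₁ with h₁ | ⟨l₁, hl₁, rfl⟩ <;>
    rcases g.newH_ne_none h₂ with h₂ | ⟨l₂, hl₂, rfl⟩
  · exact s.dom_comparable p₁ p₂ h₁ h₂ hc
  · exact .inl ((g.le_node_of_pcompat_leaf h₁ hl₂ hc).trans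
      (g.node_le_top.trans (g.top_le_leaf l₂ hl₂)))
  · exact .inr ((g.le_node_of_pcompat_leaf h₂ hl₁ hc.symm).trans
      (g.node_le_top.trans (g.top_le_leaf l₁ hl₁)))
  · by_cases he : l₁ = l₂
    · exact .inl (he ▸ le_rfl)
    · exact absurd hc (g.leaf_incompat l₁ l₂ hl₁ hl₂ he)

lemma newH_mono (p₁ p₂ : P) (ν₁ ν₂ : List Bool) (h₁ : g.newH p₁ = some ν₁)
    (h₂ : g.newH p₂ = some ν₂) (hle : p₁ ≤ p₂) : ν₁ <+: ν₂ := by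
  rcases g.newH_eq_some h₁ with h₁ | ⟨l₁, hl₁, rfl, rfl⟩ <;>
    rcases g.newH_eq_some h₂ with h₂ | ⟨l₂, hl₂, rfl, rfl⟩
  · exact s.mono p₁ p₂ ν₁ ν₂ h₁ h₂ hle
  · have hnode := g.le_node_of_pcompat_leaf (by simp [h₁]) hl₂ ⟨g.leaf l₂, hle, le_rfl⟩
    exact (s.mono _ _ _ _ h₁ g.h_node hnode).trans (List.prefix_append _ _)
  · exfalso
    have hnode := g.le_node_of_pcompat_leaf (by simp [h₂]) hl₁ ⟨p₂, le_rfl, hle⟩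
    have he : g.leaf l₁ = p₂ :=
      le_antisymm hle (hnode.trans (g.node_le_top.trans (g.top_le_leaf l₁ hl₁)))
    simp [← he, g.h_leaf hl₁] at h₂
  · by_cases he : l₁ = l₂
    · exact he ▸ List.prefix_rfl
    · exact absurd ⟨g.leaf l₂, hle, le_rfl⟩ (g.leaf_incompat l₁ l₂ hl₁ hl₂ he)

noncomputable def cond : RCond P Set.univ where
  h := g.newH
  w := s.w
  dom_finite := g.newH_dom_finite
  dom_subset _ _ := trivial
  dom_comparable := g.newH_comparable
  mono := g.newH_mono

lemma cond_h_of_h_eq_some {p : P} {ν : List Bool} (hp : s.h p = some ν) :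
    g.cond.h p = some ν :=
  (g.newH_of_ne_none (by simp [hp])).trans hp

lemma cond_h_leaf {l : List Bool} (hl : l.length = g.n) :
    g.cond.h (g.leaf l) = some (g.label ++ l) :=
  g.newH_leaf hl

lemma noLargerCompat_cond {p q : P} (hmax : NoLargerCompat s.h p q)
    (hleaf : ∀ l : List Bool, l.length = g.n → p ≤ g.leaf l → ¬ PCompat (· ≤ ·) (g.leaf l) q) :
    NoLargerCompat g.cond.h p q := by
  intro p₂ h₂ hle hne
  rcases g.newH_ne_none h₂ with h₂ | ⟨l, hl, rfl⟩
  exacts [hmax p₂ h₂ hle hne, hleaf l hl hle]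

lemma noLargerCompat_cond_leaf {l : List Bool} (hl : l.length = g.n) (q : P) :
    NoLargerCompat g.cond.h (g.leaf l) q := by
  intro p₂ h₂ hle hne _
  rcases g.newH_ne_none h₂ with h₂ | ⟨l₂, hl₂, rfl⟩
  · have hnode := g.le_node_of_pcompat_leaf h₂ hl ⟨p₂, le_rfl, hle⟩
    exact hne (le_antisymm hle (hnode.trans (g.node_le_top.trans (g.top_le_leaf l hl))))
  · have he : l = l₂ := by_contra fun he => g.leaf_incompat l l₂ hl hl₂ he ⟨_, hle, le_rfl⟩
    exact hne (he ▸ rfl)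

lemma frontAbove_cond_node {q : P} (hq : q ≤ g.top) :
    FrontAbove (frontSet g.cond.h g.node q) g.label :=
  frontAbove_of_forall_append fun l hl =>
    ⟨g.leaf l, g.cond_h_leaf hl, g.node_le_top.trans (g.top_le_leaf l hl),
      ⟨g.leaf l, le_rfl, hq.trans (g.top_le_leaf l hl)⟩, g.noLargerCompat_cond_leaf hl q⟩

lemma le_cond : s ≤ g.cond := by
  refine le_mk (fun _ _ => g.cond_h_of_h_eq_some) subset_rfl ?_
  intro q hq p ν hp hpq hmax
  -- except at `p = node` with `q ≤ top`, `p` stays maximal, so `ν` itself is in the front set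
  suffices hleaf : p = g.node ∧ q ≤ g.top ∨
      ∀ l : List Bool, l.length = g.n → p ≤ g.leaf l → ¬ PCompat (· ≤ ·) (g.leaf l) q by
    rcases hleaf with ⟨rfl, hqtop⟩ | hleaf
    · rw [g.h_node, Option.some_inj] at hp
      exact hp ▸ g.frontAbove_cond_node hqtop
    · exact frontAbove_of_mem
        ⟨p, g.cond_h_of_h_eq_some hp, le_rfl, hpq, g.noLargerCompat_cond hmax hleaf⟩
  rcases g.top_decides q hq with hqtop | hqtop
  · by_cases hpnode : p ≤ g.node
    · refine .inl ⟨?_, hqtop⟩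
      by_contra hne
      exact hmax g.node (by simp [g.h_node]) hpnode hne ⟨g.top, g.node_le_top, hqtop⟩
    · exact .inr fun l hl hle _ => hpnode (g.le_node_of_pcompat_leaf (by simp [hp]) hl
        ⟨g.leaf l, hle, le_rfl⟩)
  · exact .inr fun l _ _ hc => hqtop (hc.symm.mono le_rfl (g.top_le_leaf l ‹_›))

end Graft

lemma exists_le_covers_of_frontAbove (hsep : Separative P) (hatomless : Atomless P)
    {s : RCond P Set.univ} {p q : P} {ν₀ ν : List Bool}
    (hfront : FrontAbove (frontSet s.h p q) ν₀) (hν : ν₀ <+: ν) :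
    ∃ s', s ≤ s' ∧ s'.Covers p q ν := by
  have hη : ∀ {k}, k ≤ ν.length → restrict (fun i => ν.getD i false) k = ν.take k :=
    restrict_getD
  obtain ⟨k, p₁, hp₁, hpp₁, ⟨t, hp₁t, hqt⟩, hmax⟩ :=
    hfront _ ((hη hν.length_le).trans (List.prefix_iff_eq_take.mp hν).symm)
  rcases le_or_gt ν.length k with hk | hk
  · refine ⟨s, le_rfl, p₁, _, hp₁, hpp₁, ⟨t, hp₁t, hqt⟩, ?_⟩
    have hpre := restrict_prefix (fun i => ν.getD i false) hk
    rwa [hη le_rfl, List.take_length] at hpre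
  obtain ⟨x, htx, hdec⟩ := hsep.exists_le_decides s.w t
  obtain ⟨f, hfx, hf⟩ := hatomless.exists_pairwise_incompat (ν.length - k) x
  have hp₁dom : s.h p₁ ≠ none := by simp [hp₁]
  let g : s.Graft :=
    { node := p₁, label := ν.take k, top := x, n := ν.length - k, leaf := f
      h_node := hη hk.le ▸ hp₁
      node_le_top := hp₁t.trans htx
      le_node_of_pcompat_top := fun p₂ hp₂ hc => s.le_of_pcompat_of_noLargerCompat hp₂ hp₁dom
        hmax hp₁t hqt (hc.mono le_rfl htx)
      top_decides := hdec
      n_pos := by omega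
      top_le_leaf := hfx
      leaf_incompat := hf }
  have hl : (ν.drop k).length = g.n := List.length_drop
  refine ⟨g.cond, g.le_cond, f (ν.drop k), ν, ?_, hpp₁.trans (g.node_le_top.trans (hfx _ hl)),
    ⟨f (ν.drop k), le_rfl, hqt.trans (htx.trans (hfx _ hl))⟩, List.prefix_rfl⟩
  simpa [g] using g.cond_h_leaf hl

end RCond

/-- For a separative atomless poset `P`, a condition `r₀ = ⟨h₀,w₀⟩` of `R_P(P)` and `m ∈ ω`,
the set `I²_{r₀,m}` is dense in `R_P(P)`: it consists of those `r = ⟨h,w⟩` which are either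
incompatible with `r₀`, or such that for every `q ∈ w₀`, every `p ∈ dom h₀` compatible with
`q` and maximal (in `dom h₀`) with that property, and every `ν ∈ 2^m` extending `h₀(p)`,
there is `p″ ∈ dom h` with `p ≤ p″`, `p″` compatible with `q` and `ν ⊆ h(p″)`. -/
theorem rcond_I2_dense (P : Type) [PartialOrder P]
    (hsep : Separative P) (hatomless : Atomless P)
    (r₀ : RCond P Set.univ) (m : ℕ) :
    PDense (RCond.le (P := P) (S := Set.univ))
      {r : RCond P Set.univ |
        ¬ PCompat (RCond.le (P := P) (S := Set.univ)) r r₀ ∨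
        ∀ q ∈ r₀.w, ∀ (p : P) (ν₀ : List Bool), r₀.h p = some ν₀ →
          PCompat (· ≤ ·) p q →
          (¬ ∃ p' : P, r₀.h p' ≠ none ∧ p ≤ p' ∧ p ≠ p' ∧ PCompat (· ≤ ·) p' q) →
          ∀ ν : List Bool, ν.length = m → ν₀ <+: ν →
            ∃ (p'' : P) (μ : List Bool), r.h p'' = some μ ∧ p ≤ p'' ∧
              PCompat (· ≤ ·) p'' q ∧ ν <+: μ} := by
  intro r
  by_cases hc : PCompat (RCond.le (P := P) (S := Set.univ)) r r₀
  swap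
  · exact ⟨r, .inl hc, le_refl r⟩
  obtain ⟨s, hrs, hr₀s⟩ := hc
  let I : Set (P × P × List Bool) := {e | e.1 ∈ r₀.w ∧ ∃ ν₀, r₀.h e.2.1 = some ν₀ ∧
    PCompat (· ≤ ·) e.2.1 e.1 ∧
    (¬ ∃ p' : P, r₀.h p' ≠ none ∧ e.2.1 ≤ p' ∧ e.2.1 ≠ p' ∧ PCompat (· ≤ ·) p' e.1) ∧
    e.2.2.length = m ∧ ν₀ <+: e.2.2}
  have hI : I.Finite :=
    (r₀.w.finite_toSet.prod (r₀.dom_finite.prod (List.finite_length_eq Bool m))).subset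
      fun _ ⟨hq, _, hp, _, _, hν, _⟩ => ⟨hq, by simp [hp], hν⟩
  obtain ⟨s', hss', hs'⟩ := exists_le_forall_mem_of_finite hI
    (D := fun e => {r : RCond P Set.univ | r.Covers e.2.1 e.1 e.2.2})
    (fun _ _ => RCond.isUpperSet_covers _ _ _)
    (fun _ ⟨hq, _, hp, hpq, hmax, _, hν⟩ t ht =>
      RCond.exists_le_covers_of_frontAbove hsep hatomless
        (RCond.frontAbove_of_le ht hq hp hpq hmax) hν)
    s hr₀s
  exact ⟨s', .inr fun q hq p ν₀ hp hpq hmax ν hν hν₀ =>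
    hs' (q, p, ν) ⟨hq, ν₀, hp, hpq, hmax, hν, hν₀⟩, le_trans (α := RCond P Set.univ) hrs hss'⟩
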